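/- There exists a unique ring automorphism σ of E_A fixing A pointwise, with σ(t^a) = γ(a)·t^a for all representatives a of K/ℤ and σ(ℓ) = ℓ + 1; moreover σ stabilizes A[t^K] and commutes with the derivation ∂ of E_A. -/

import Mathlib

open scoped TensorProduct
open Polynomial

noncomputable section

/-- `K[t,t⁻¹] → K[t^K]`: the inclusion of the Laurent polynomials (the group algebra
of `ℤ`) into the group algebra `K⟨K⟩ = K[t^K]` of the additive group `(K,+)`. -/
instance instLaurentToGrpAlg (K : Type) [Field K] :
    Algebra (LaurentPolynomial K) (AddMonoidAlgebra K K) :=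
  (AddMonoidAlgebra.mapDomainRingHom K (Int.castAddHom K)).toAlgebra

variable (K : Type) [Field K] [IsAlgClosed K] [CharZero K]
variable (A : Type) [CommRing A] [Algebra K A] [Algebra (LaurentPolynomial K) A]
  [IsScalarTower K (LaurentPolynomial K) A]

/-- `A[t^K] := A ⊗_{K[t,t⁻¹]} K[t^K]`. -/
abbrev AtK := A ⊗[LaurentPolynomial K] (AddMonoidAlgebra K K)

/-- The ring of exponents `E_A := A[t^K][ℓ]`. -/
abbrev EA := Polynomial (AtK K A)

/-- The canonical inclusion `A → E_A`. -/
def iA : A →+* EA K A :=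
  (Polynomial.C).comp (Algebra.TensorProduct.includeLeftRingHom)

/-- The element `t^a ∈ A[t^K] ⊆ E_A`, for `a ∈ K`. -/
def tpow (a : K) : EA K A :=
  Polynomial.C ((1:A) ⊗ₜ[LaurentPolynomial K] (AddMonoidAlgebra.single a 1))

/-- `t ∈ A`, the image of the Laurent variable. -/
def tA : A := algebraMap (LaurentPolynomial K) A (LaurentPolynomial.T 1)

variable {K A}

/-- `∂ : A → A` is a derivation extending `t·d/dt` on `K[t,t⁻¹]`: it kills the
constants `K` and sends `t` to `t`. -/
def ExtendsTddt (dA : Derivation ℤ A A) : Prop :=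
  (∀ c : K, dA (algebraMap K A c) = 0) ∧ dA (tA K A) = tA K A

/-- The characterizing properties of the derivation `∂` on `E_A`: it extends the
derivation `∂` of `A`, satisfies `∂(t^a) = a·t^a` for all `a ∈ K`, and `∂(ℓ) = 1`. -/
def DProps (dA : Derivation ℤ A A) (D : Derivation ℤ (EA K A) (EA K A)) : Prop :=
  (∀ x : A, D (iA K A x) = iA K A (dA x)) ∧
  (∀ a : K, D (tpow K A a) = a • tpow K A a) ∧
  D (Polynomial.X : EA K A) = 1

/-- `γ : K → Kˣ` is a group homomorphism from `(K,+)` to `Kˣ` with kernel exactly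
`ℤ` (induced by a choice of isomorphism `K/ℤ ≅ Kˣ`). -/
def GammaProps (γ : K → Kˣ) : Prop :=
  (∀ a b : K, γ (a + b) = γ a * γ b) ∧ (∀ a : K, γ a = 1 ↔ ∃ n : ℤ, (n : K) = a)

/-- The characterizing properties of the monodromy automorphism `σ` of `E_A`:
it fixes `A` pointwise, `σ(t^a) = γ(a)·t^a`, and `σ(ℓ) = ℓ + 1`. -/
def SProps (γ : K → Kˣ) (σ : EA K A ≃+* EA K A) : Prop :=
  (∀ x : A, σ (iA K A x) = iA K A x) ∧
  (∀ a : K, σ (tpow K A a) = ((γ a : K) • tpow K A a)) ∧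
  σ (Polynomial.X : EA K A) = Polynomial.X + 1

/-- `A` is a differential `K`-algebra without exponents nor logarithm:
`A^{∂²=0} = K` and `A^{∂+a=0} = 0` for every `a ∈ K` not in `ℤ`. -/
def NoExpLog (dA : Derivation ℤ A A) : Prop :=
  (∀ x : A, dA (dA x) = 0 ↔ ∃ c : K, x = algebraMap K A c) ∧
  (∀ a : K, (¬ ∃ n : ℤ, (n : K) = a) → ∀ x : A, dA x + a • x = 0 → x = 0)

end

/-! The ring `E_A` is generated by `A`, the `t^a` and `ℓ`, and `A[t^K]` by `A` and the `t^a`.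
Hence `σ` is determined by its values on generators, and stabilizes `A[t^K]`; and `σ ∂ = ∂ σ`
holds everywhere because the set where it holds is a subring containing the generators.
For existence, twist the group algebra `K[t^K]` by the character `γ`; as `γ` is trivial on `ℤ`
this is `K[t,t⁻¹]`-linear, so it extends to `A[t^K]`. Apply it to the coefficients of
polynomials in `ℓ` and follow with the shift `ℓ ↦ ℓ + 1`. -/

namespace AddMonoidAlgebra

variable {k G : Type*} [CommSemiring k] [AddMonoid G]

theorem adjoin_range_single_one :
    Algebra.adjoin k (Set.range fun a : G => single a (1 : k)) = ⊤ :=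
  eq_top_iff.2 fun f _ => Algebra.adjoin_mono (by rintro _ ⟨a, -, rfl⟩; exact ⟨a, rfl⟩)
    (mem_adjoin_support f)

noncomputable def twistHom (χ : Multiplicative G →* kˣ) :
    Multiplicative G →* AddMonoidAlgebra k G where
  toFun a := single a.toAdd (χ a : k)
  map_one' := by simp [one_def]
  map_mul' a b := by simp [single_mul_single]

noncomputable def twist (χ : Multiplicative G →* kˣ) :
    AddMonoidAlgebra k G ≃ₐ[k] AddMonoidAlgebra k G :=
  AlgEquiv.ofAlgHom (lift k _ _ (twistHom χ)) (lift k _ _ (twistHom χ⁻¹))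
    (algHom_ext (fun a => by simp [twistHom]) (Subsingleton.elim _ _))
    (algHom_ext (fun a => by simp [twistHom]) (Subsingleton.elim _ _))

theorem twist_single (χ : Multiplicative G →* kˣ) (a : G) (c : k) :
    twist χ (single a c) = single a (χ (.ofAdd a) * c) := by
  simp [twist, twistHom, mul_comm]

theorem twist_mapDomain {H : Type*} [AddMonoid H] (χ : Multiplicative G →* kˣ) (φ : H →+ G)
    (hχ : ∀ h, χ (.ofAdd (φ h)) = 1) (f : AddMonoidAlgebra k H) :
    twist χ (mapDomainAlgHom k k φ f) = mapDomainAlgHom k k φ f := by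
  have : ((twist χ).toAlgHom.comp (mapDomainAlgHom k k φ)) = mapDomainAlgHom k k φ :=
    algHom_ext (fun h => by simp [twist_single, hχ]) (Subsingleton.elim _ _)
  exact DFunLike.congr_fun this f

end AddMonoidAlgebra

theorem Derivation.map_comm_of_closure_eq_top {k R S : Type*} [CommSemiring k] [CommRing R]
    [CommRing S] [Algebra k R] [Algebra k S] (f : R →+* S) (D₁ : Derivation k R R)
    (D₂ : Derivation k S S) {s : Set R}
    (hs : Subring.closure s = ⊤) (h : ∀ x ∈ s, f (D₁ x) = D₂ (f x)) (x : R) :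
    f (D₁ x) = D₂ (f x) := by
  induction (hs ▸ Subring.mem_top x : x ∈ Subring.closure s) using
    Subring.closure_induction with
  | mem x hx => exact h x hx
  | zero => simp
  | one => simp
  | add x y _ _ hx hy => simp [hx, hy]
  | neg x _ hx => simp [hx]
  | mul x y _ _ hx hy => simp only [Derivation.leibniz, smul_eq_mul, map_add, map_mul, hx, hy]

open AddMonoidAlgebra

section Monodromy

variable {K : Type} [Field K]

instance : IsScalarTower K (LaurentPolynomial K) (AddMonoidAlgebra K K) :=
  IsScalarTower.of_algebraMap_eq fun c => by
    show single 0 c = mapDomain _ (single 0 c)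
    rw [mapDomain_single]
    simp

noncomputable def twistLaurent (χ : Multiplicative K →* Kˣ)
    (hχ : ∀ n : ℤ, χ (.ofAdd (n : K)) = 1) :
    AddMonoidAlgebra K K ≃ₐ[LaurentPolynomial K] AddMonoidAlgebra K K :=
  { twist χ with commutes' := twist_mapDomain χ (Int.castAddHom K) hχ }

variable {A : Type} [CommRing A] [Algebra (LaurentPolynomial K) A]

variable (K A) in
theorem closure_includeLeft_tmul_single_eq_top :
    Subring.closure (Set.range (Algebra.TensorProduct.includeLeftRingHom : A →+* AtK K A) ∪
      Set.range fun a : K => (1 : A) ⊗ₜ[LaurentPolynomial K] single a (1 : K)) = ⊤ := by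
  set s : Set (AddMonoidAlgebra K K) := Set.range fun a : K => single a (1 : K)
  have hK : Algebra.adjoin K s ≤ (Algebra.adjoin (LaurentPolynomial K) s).restrictScalars K :=
    Algebra.adjoin_le Algebra.subset_adjoin
  have hB : Algebra.adjoin (LaurentPolynomial K) s = ⊤ :=
    eq_top_iff.2 fun f _ => hK (adjoin_range_single_one (k := K) (G := K) ▸ Algebra.mem_top)
  have := congrArg Subalgebra.toSubring
    (Algebra.TensorProduct.adjoin_one_tmul_image_eq_top (A := A) _ hB)
  rwa [Algebra.adjoin_eq_ring_closure, ← Set.range_comp] at this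

variable (K A) in
theorem C_mem_closure_iA_tpow (c : AtK K A) :
    C c ∈ Subring.closure (Set.range (iA K A) ∪ Set.range (tpow K A)) := by
  have hle : Subring.closure
      (Set.range (Algebra.TensorProduct.includeLeftRingHom : A →+* AtK K A) ∪
        Set.range fun a : K => (1 : A) ⊗ₜ[LaurentPolynomial K] single a (1 : K)) ≤
      (Subring.closure (Set.range (iA K A) ∪ Set.range (tpow K A))).comap C :=
    Subring.closure_le.2 <| Set.union_subset
      (Set.range_subset_iff.2 fun x => Subring.subset_closure (.inl ⟨x, rfl⟩))
      (Set.range_subset_iff.2 fun a => Subring.subset_closure (.inr ⟨a, rfl⟩))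
  exact hle (closure_includeLeft_tmul_single_eq_top K A ▸ Subring.mem_top c)

variable (K A) in
theorem closure_iA_tpow_X_eq_top :
    Subring.closure (Set.range (iA K A) ∪ Set.range (tpow K A) ∪ {X}) = ⊤ := by
  have h : Subring.closure (Set.range (algebraMap (AtK K A) (EA K A)) ∪ {X}) = ⊤ :=
    (Algebra.adjoin_eq_ring_closure _).symm.trans (by rw [Polynomial.adjoin_X]; rfl)
  rw [eq_top_iff, ← h, Subring.closure_le]
  refine Set.union_subset ?_ ?_
  · rintro _ ⟨c, rfl⟩
    exact Subring.closure_mono Set.subset_union_left (C_mem_closure_iA_tpow K A c)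
  · exact Set.singleton_subset_iff.2 (Subring.subset_closure (.inr rfl))

variable (χ : Multiplicative K →* Kˣ) (hχ : ∀ n : ℤ, χ (.ofAdd (n : K)) = 1)

noncomputable def twistAtK : AtK K A ≃ₐ[A] AtK K A :=
  Algebra.TensorProduct.congr AlgEquiv.refl (twistLaurent χ hχ)

noncomputable def monodromy : EA K A ≃+* EA K A :=
  (mapEquiv (twistAtK χ hχ).toRingEquiv).trans (algEquivAevalXAddC (1 : AtK K A)).toRingEquiv

theorem twistAtK_tmul (x : A) (y : AddMonoidAlgebra K K) :
    twistAtK χ hχ (x ⊗ₜ y) = x ⊗ₜ twist χ y :=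
  rfl

theorem monodromy_C (c : AtK K A) : monodromy χ hχ (C c) = C (twistAtK χ hχ c) := by
  simp [monodromy]

theorem monodromy_X : monodromy (A := A) χ hχ X = X + 1 := by
  simp [monodromy]

theorem monodromy_iA (x : A) : monodromy χ hχ (iA K A x) = iA K A x := by
  simp [iA, monodromy_C, twistAtK_tmul]

theorem monodromy_tpow [Algebra K A] [IsScalarTower K (LaurentPolynomial K) A] (a : K) :
    monodromy χ hχ (tpow K A a) = (χ (.ofAdd a) : K) • tpow K A a := by
  rw [tpow, monodromy_C, twistAtK_tmul, twist_single, ← smul_single', TensorProduct.tmul_smul,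
    smul_C]

end Monodromy

section SProps

variable {K A : Type} [Field K] [CommRing A] [Algebra K A] [Algebra (LaurentPolynomial K) A]
  [IsScalarTower K (LaurentPolynomial K) A] {γ : K → Kˣ} {σ : EA K A ≃+* EA K A}

theorem smul_eq_iA_mul (c : K) (z : EA K A) : c • z = iA K A (algebraMap K A c) * z :=
  Algebra.smul_def c z

theorem SProps.map_smul (hσ : SProps γ σ) (c : K) (z : EA K A) : σ (c • z) = c • σ z := by
  rw [smul_eq_iA_mul, map_mul, hσ.1, smul_eq_iA_mul]

theorem SProps.unique {τ : EA K A ≃+* EA K A} (hσ : SProps γ σ) (hτ : SProps γ τ) : σ = τ := by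
  refine RingEquiv.toRingHom_injective <|
    RingHom.eq_of_eqOn_set_dense (closure_iA_tpow_X_eq_top K A) ?_
  rintro _ ((⟨x, rfl⟩ | ⟨a, rfl⟩) | rfl)
  · exact (hσ.1 x).trans (hτ.1 x).symm
  · exact (hσ.2.1 a).trans (hτ.2.1 a).symm
  · exact hσ.2.2.trans hτ.2.2.symm

theorem SProps.map_C_mem_range (hσ : SProps γ σ) (c : AtK K A) :
    σ (C c) ∈ Set.range (C : AtK K A → EA K A) := by
  have hle : Subring.closure (Set.range (iA K A) ∪ Set.range (tpow K A)) ≤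
      Subring.comap (S := EA K A) σ.toRingHom (C : AtK K A →+* EA K A).range := by
    rw [Subring.closure_le]
    rintro _ (⟨x, rfl⟩ | ⟨a, rfl⟩)
    · exact ⟨_, (hσ.1 x).symm⟩
    · exact ⟨_, (smul_C _ _).symm.trans (hσ.2.1 a).symm⟩
  exact hle (C_mem_closure_iA_tpow K A c)

theorem DProps.map_smul {dA : Derivation ℤ A A} {D : Derivation ℤ (EA K A) (EA K A)}
    (hD : DProps dA D) (hdA : ∀ c : K, dA (algebraMap K A c) = 0) (c : K) (z : EA K A) :
    D (c • z) = c • D z := by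
  rw [smul_eq_iA_mul, Derivation.leibniz, hD.1, hdA, map_zero, smul_zero, add_zero, smul_eq_mul,
    smul_eq_iA_mul]

theorem SProps.map_derivation {dA : Derivation ℤ A A} {D : Derivation ℤ (EA K A) (EA K A)}
    (hσ : SProps γ σ) (hD : DProps dA D) (hdA : ∀ c : K, dA (algebraMap K A c) = 0)
    (z : EA K A) : σ (D z) = D (σ z) := by
  refine Derivation.map_comm_of_closure_eq_top (S := EA K A) σ.toRingHom D D
    (closure_iA_tpow_X_eq_top K A) ?_ z
  rintro _ ((⟨x, rfl⟩ | ⟨a, rfl⟩) | rfl)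
  · simp only [RingEquiv.toRingHom_eq_coe, RingHom.coe_coe, hD.1, hσ.1]
  · simp only [RingEquiv.toRingHom_eq_coe, RingHom.coe_coe, hD.2.1, hσ.2.1, hσ.map_smul,
      hD.map_smul hdA, smul_comm a]
  · simp [hD.2.2, hσ.2.2]

end SProps

theorem stmt_8 (K : Type) [Field K]
    (A : Type) [CommRing A] [Algebra K A] [Algebra (LaurentPolynomial K) A]
    [IsScalarTower K (LaurentPolynomial K) A]
    (dA : Derivation ℤ A A) (hdA : ExtendsTddt (K := K) dA)
    (γ : K → Kˣ) (hγ : GammaProps γ)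
    (D : Derivation ℤ (EA K A) (EA K A)) (hD : DProps (K := K) dA D) :
    (∃! σ : EA K A ≃+* EA K A, SProps γ σ) ∧
    (∀ σ : EA K A ≃+* EA K A, SProps γ σ →
      (∀ x : AtK K A, σ (Polynomial.C x) ∈
          Set.range (Polynomial.C : AtK K A → EA K A)) ∧
      (∀ x : EA K A, σ (D x) = D (σ x))) := by
  obtain ⟨hγ_add, hγ_ker⟩ := hγ
  let χ : Multiplicative K →* Kˣ := MonoidHom.mk' (fun a => γ a.toAdd) fun a b => hγ_add _ _
  have hχ : ∀ n : ℤ, χ (.ofAdd (n : K)) = 1 := fun n => (hγ_ker _).2 ⟨n, rfl⟩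
  have hmonodromy : SProps γ (monodromy (A := A) χ hχ) :=
    ⟨monodromy_iA χ hχ, monodromy_tpow χ hχ, monodromy_X χ hχ⟩
  exact ⟨⟨_, hmonodromy, fun σ hσ => hσ.unique hmonodromy⟩,
    fun σ hσ => ⟨hσ.map_C_mem_range, hσ.map_derivation hD hdA.1⟩⟩
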